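/- arXiv:1909.06819 — 3 statements merged into one kernel-verified Lean document; each statement's English description precedes it below -/
import Mathlib

section
/- Let Γ be a graph with n vertices, m edges, and c connected components. Then the number of switching equivalence classes of signed graphs on Γ is 2^{m−n+c}. -/
/-!
Switching is the action of the group `(V → ℤˣ)` of vertex signings on the group `(E → ℤˣ)`
of edge signings through the homomorphism `θ ↦ (uv ↦ θ u θ v)`, so the switching classes are
the cosets of its range. Its kernel consists of the signings that are constant on connected
components, of order `2^c`, hence the range has order `2^(n - c)` and the number of cosets is
`2^m / 2^(n - c)`.
-/

open SimpleGraph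

variable {V : Type*}

/-- The factor `θ(u)θ(v)` attached to an edge `{u,v}`. -/
def switchFactor (θ : V → ℤˣ) : Sym2 V → ℤˣ :=
  Sym2.lift ⟨fun u v => θ u * θ v, fun _ _ => mul_comm _ _⟩

/-- The switched sign function `σ^θ`, with `σ^θ(uv) = θ(u)σ(uv)θ(v)`. -/
def switched (G : SimpleGraph V) (σ : G.edgeSet → ℤˣ) (θ : V → ℤˣ) :
    G.edgeSet → ℤˣ := fun e => switchFactor θ e.val * σ e

/-- Two sign functions are switching equivalent if one is a switching of the other. -/
def SwitchEquiv (G : SimpleGraph V) (σ₁ σ₂ : G.edgeSet → ℤˣ) : Prop :=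
  ∃ θ : V → ℤˣ, σ₂ = switched G σ₁ θ

lemma MonoidHom.card_quotient_range_mul_card {G H : Type*} [Group G] [Group H] (f : G →* H) :
    Nat.card (H ⧸ f.range) * Nat.card G = Nat.card H * Nat.card f.ker := by
  rw [← f.ker.card_mul_index, Subgroup.index_ker, ← f.range.card_mul_index,
    ← Subgroup.index_eq_card]
  ring

lemma Nat.eq_pow_sub_of_mul_pow_eq {b q n k : ℕ} (hb : 1 < b) (h : q * b ^ n = b ^ k) :
    q = b ^ (k - n) := by
  have hnk : n ≤ k := (Nat.pow_dvd_pow_iff_le_right hb).mp (Dvd.intro_left q h)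
  rw [← Nat.pow_div hnk (by omega), ← h, Nat.mul_div_cancel _ (by positivity)]

lemma card_fun_units_int (α : Type*) [Finite α] : Nat.card (α → ℤˣ) = 2 ^ Nat.card α := by
  rw [Nat.card_fun, Nat.card_eq_fintype_card, Fintype.card_units_int]

@[simp] lemma switchFactor_mk (θ : V → ℤˣ) (u v : V) :
    switchFactor θ s(u, v) = θ u * θ v := rfl

def switchHom (G : SimpleGraph V) : (V → ℤˣ) →* (G.edgeSet → ℤˣ) where
  toFun θ e := switchFactor θ e.val
  map_one' := by
    funext ⟨e, _⟩
    induction e using Sym2.inductionOn with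
    | hf u v => simp
  map_mul' θ η := by
    funext ⟨e, _⟩
    induction e using Sym2.inductionOn with
    | hf u v => exact mul_mul_mul_comm _ _ _ _

lemma switched_eq_switchHom_mul (G : SimpleGraph V) (σ : G.edgeSet → ℤˣ) (θ : V → ℤˣ) :
    switched G σ θ = switchHom G θ * σ := rfl

lemma switchEquiv_iff_leftRel (G : SimpleGraph V) (σ₁ σ₂ : G.edgeSet → ℤˣ) :
    SwitchEquiv G σ₁ σ₂ ↔ QuotientGroup.leftRel (switchHom G).range σ₁ σ₂ := by
  rw [QuotientGroup.leftRel_apply]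
  constructor
  · rintro ⟨θ, rfl⟩
    exact ⟨θ, by rw [switched_eq_switchHom_mul, mul_comm (switchHom G θ), inv_mul_cancel_left]⟩
  · rintro ⟨θ, hθ⟩
    exact ⟨θ, by rw [switched_eq_switchHom_mul, hθ, mul_comm, mul_inv_cancel_left]⟩

def switchClassesEquivQuotient (G : SimpleGraph V) :
    Quot (SwitchEquiv G) ≃ (G.edgeSet → ℤˣ) ⧸ (switchHom G).range :=
  (Quot.congrRight (switchEquiv_iff_leftRel G)).trans (Quotient.congrRight fun _ _ => Iff.rfl)

lemma mem_ker_switchHom_iff {G : SimpleGraph V} {θ : V → ℤˣ} :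
    θ ∈ (switchHom G).ker ↔ ∀ u v, G.Reachable u v → θ u = θ v := by
  constructor
  · rintro hθ u v ⟨p⟩
    induction p with
    | nil => rfl
    | @cons a b _ hab _ ih =>
      have hab' : θ a * θ b = 1 := congrFun hθ ⟨s(a, b), hab⟩
      rw [mul_eq_one_iff_eq_inv.mp hab', Int.units_inv_eq_self, ih]
  · intro hθ
    funext ⟨e, he⟩
    induction e using Sym2.inductionOn with
    | hf u v =>
      change θ u * θ v = 1
      rw [hθ u v ((mem_edgeSet G).mp he).reachable, Int.units_mul_self]

def kerSwitchHomEquiv (G : SimpleGraph V) :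
    (switchHom G).ker ≃ (G.ConnectedComponent → ℤˣ) where
  toFun θ := ConnectedComponent.lift θ.1 fun u v p _ => mem_ker_switchHom_iff.mp θ.2 u v ⟨p⟩
  invFun f := ⟨fun v => f (G.connectedComponentMk v), mem_ker_switchHom_iff.mpr fun _ _ h => by
    rw [ConnectedComponent.sound h]⟩
  left_inv _ := rfl
  right_inv f := by
    funext c
    induction c using ConnectedComponent.ind
    rfl

theorem card_switching_classes (G : SimpleGraph V) [Fintype V]
    [DecidableRel G.Adj] :
    Nat.card (Quot (SwitchEquiv G)) =
      2 ^ (G.edgeFinset.card + Nat.card G.ConnectedComponent - Fintype.card V) := by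
  rw [Nat.card_congr (switchClassesEquivQuotient G)]
  refine Nat.eq_pow_sub_of_mul_pow_eq one_lt_two ?_
  have hcount := (switchHom G).card_quotient_range_mul_card
  rw [Nat.card_congr (kerSwitchHomEquiv G), card_fun_units_int, card_fun_units_int,
    card_fun_units_int] at hcount
  rw [pow_add, edgeFinset_card, ← Nat.card_eq_fintype_card, ← Nat.card_eq_fintype_card, hcount]
end

section
/- There are exactly 2^{(n−1)(n−2)/2} switching equivalence classes of signed graphs whose underlying graph is the complete graph K_n (n ≥ 1). -/
open SimpleGraph

variable {V : Type*}

/-!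
Switching by `θ` multiplies `σ` by the coboundary `δθ(uv) = θ(u)θ(v)`, and `δ` is a homomorphism
`(V → ℤˣ) →* (E → ℤˣ)`, so switching classes are the cosets of its range. On a connected graph the
kernel of `δ` consists of the two constant functions, hence there are `2^|E| / (2^|V| / 2)`
classes; for `K_n` the exponent is `C(n,2) - n + 1 = C(n-1,2)`.
-/

theorem Int.natCard_units : Nat.card ℤˣ = 2 := by
  rw [Nat.card_eq_fintype_card, Fintype.card_units_int]

namespace SimpleGraph

variable (G : SimpleGraph V)

def switchingHom : (V → ℤˣ) →* (G.edgeSet → ℤˣ) where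
  toFun θ e := switchFactor θ e.val
  map_one' := by
    funext ⟨e, _⟩
    induction e using Sym2.ind
    simp [switchFactor]
  map_mul' θ₁ θ₂ := by
    funext ⟨e, _⟩
    induction e using Sym2.ind
    simp [switchFactor, mul_mul_mul_comm]

theorem switched_eq_switchingHom_mul (σ : G.edgeSet → ℤˣ) (θ : V → ℤˣ) :
    switched G σ θ = G.switchingHom θ * σ :=
  rfl

theorem switchEquiv_iff_inv_mul_mem_range (σ₁ σ₂ : G.edgeSet → ℤˣ) :
    SwitchEquiv G σ₁ σ₂ ↔ σ₁⁻¹ * σ₂ ∈ G.switchingHom.range := by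
  simp only [SwitchEquiv, MonoidHom.mem_range, switched_eq_switchingHom_mul]
  refine exists_congr fun θ => ?_
  rw [eq_inv_mul_iff_mul_eq, mul_comm, eq_comm]

def switchingClassesEquiv :
    Quot (SwitchEquiv G) ≃ (G.edgeSet → ℤˣ) ⧸ G.switchingHom.range :=
  Quot.congrRight fun σ₁ σ₂ =>
    (G.switchEquiv_iff_inv_mul_mem_range σ₁ σ₂).trans QuotientGroup.leftRel_apply.symm

theorem mem_ker_switchingHom_iff (θ : V → ℤˣ) :
    θ ∈ G.switchingHom.ker ↔ ∀ u v, G.Adj u v → θ u = θ v := by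
  simp [switchingHom, switchFactor, funext_iff, Sym2.forall, mul_eq_one_iff_eq_inv,
    Int.units_inv_eq_self]

variable {G}

theorem Reachable.apply_eq_apply {α : Type*} {f : V → α} (hf : ∀ u v, G.Adj u v → f u = f v)
    {u v : V} (h : G.Reachable u v) : f u = f v := by
  rw [reachable_iff_reflTransGen] at h
  induction h with
  | refl => rfl
  | tail _ hadj ih => exact ih.trans (hf _ _ hadj)

theorem Connected.ker_switchingHom (hG : G.Connected) :
    G.switchingHom.ker = (Pi.constMonoidHom V ℤˣ).range := by
  ext θ
  rw [mem_ker_switchingHom_iff, MonoidHom.mem_range]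
  constructor
  · intro h
    obtain ⟨v₀⟩ := hG.nonempty
    exact ⟨θ v₀, funext fun v => (hG v₀ v).apply_eq_apply h⟩
  · rintro ⟨c, rfl⟩ u v _
    rfl

theorem Connected.card_ker_switchingHom (hG : G.Connected) :
    Nat.card G.switchingHom.ker = 2 := by
  have : Nonempty V := hG.nonempty
  rw [hG.ker_switchingHom, ← Nat.card_congr (MonoidHom.ofInjective (f := Pi.constMonoidHom V ℤˣ)
    Function.const_injective).toEquiv, Int.natCard_units]

theorem Connected.card_switchingClasses_mul [Finite V] (hG : G.Connected) :
    Nat.card (Quot (SwitchEquiv G)) * 2 ^ Nat.card V = 2 ^ Nat.card G.edgeSet * 2 := by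
  have hE : Nat.card (G.edgeSet → ℤˣ) =
      Nat.card (Quot (SwitchEquiv G)) * Nat.card G.switchingHom.range := by
    rw [Nat.card_congr G.switchingClassesEquiv, ← Subgroup.card_eq_card_quotient_mul_card_subgroup]
  have hV : Nat.card (V → ℤˣ) = Nat.card G.switchingHom.range * 2 := by
    rw [G.switchingHom.ker.card_eq_card_quotient_mul_card_subgroup,
      Nat.card_congr (QuotientGroup.quotientKerEquivRange _).toEquiv, hG.card_ker_switchingHom]
  rw [Nat.card_fun, Int.natCard_units] at hE hV
  rw [hV, hE, mul_assoc]

end SimpleGraph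

theorem card_switching_classes_complete (n : ℕ) (hn : 1 ≤ n) :
    Nat.card (Quot (SwitchEquiv (⊤ : SimpleGraph (Fin n)))) =
      2 ^ ((n - 1) * (n - 2) / 2) := by
  obtain ⟨m, rfl⟩ := Nat.exists_eq_add_of_le' hn
  have hcount := (connected_top (V := Fin (m + 1))).card_switchingClasses_mul
  rw [Nat.card_eq_fintype_card (α := edgeSet ⊤), ← edgeFinset_card,
    card_edgeFinset_top_eq_card_choose_two, Nat.card_fin, Fintype.card_fin] at hcount
  apply Nat.eq_of_mul_eq_mul_right (pow_pos two_pos (m + 1))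
  rw [hcount, Nat.add_sub_cancel, show m + 1 - 2 = m - 1 by omega, ← Nat.choose_two_right,
    ← pow_succ, ← pow_add, Nat.choose_succ_succ', Nat.choose_one_right]
  ring_nf
end

section
/- The number of switching isomorphism classes of signed graphs on the complete graph K_n (n ≥ 4) is at least the number of isomorphism classes of simple graphs on n vertices with maximum degree at most ⌊n/4⌋ − 1. -/
open SimpleGraph

variable {V : Type*}

/-- The action of an automorphism `φ` on sign functions: `σ^φ(uv) = σ(φ⁻¹(u)φ⁻¹(v))`. -/
def actSign (G : SimpleGraph V) (φ : G ≃g G) (σ : G.edgeSet → ℤˣ) :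
    G.edgeSet → ℤˣ := fun e => σ (φ.symm.toHom.mapEdgeSet e)


/-- Switching isomorphism: `σ₁` is isomorphic (via some automorphism of `G`) to a
switching equivalent of `σ₂`. -/
def SwitchIso (G : SimpleGraph V) (σ₁ σ₂ : G.edgeSet → ℤˣ) : Prop :=
  ∃ φ : G ≃g G, SwitchEquiv G (actSign G φ σ₁) σ₂

-- basic lemmas
lemma switchFactor_pair (θ : V → ℤˣ) (u v : V) : switchFactor θ s(u,v) = θ u * θ v := rfl

lemma mapEdgeSet_val {G : SimpleGraph V} (f : G →g G) (e : G.edgeSet) :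
    (f.mapEdgeSet e).val = Sym2.map f e.val := rfl

lemma switchFactor_comp (θ : V → ℤˣ) (g : V → V) (p : Sym2 V) :
    switchFactor θ (Sym2.map g p) = switchFactor (θ ∘ g) p := by
  induction p using Sym2.ind with
  | _ u v => simp [switchFactor_pair]

lemma switchFactor_mul (θ τ : V → ℤˣ) (p : Sym2 V) :
    switchFactor (θ * τ) p = switchFactor θ p * switchFactor τ p := by
  induction p using Sym2.ind with
  | _ u v =>
    simp only [switchFactor_pair, Pi.mul_apply]
    exact mul_mul_mul_comm _ _ _ _

lemma switched_one (G : SimpleGraph V) (σ : G.edgeSet → ℤˣ) :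
    switched G σ 1 = σ := by
  funext e
  unfold switched
  have : switchFactor (1 : V → ℤˣ) e.val = 1 := by
    induction e.val using Sym2.ind with
    | _ u v => simp [switchFactor_pair]
  rw [this, one_mul]

lemma switched_switched (G : SimpleGraph V) (σ : G.edgeSet → ℤˣ) (θ τ : V → ℤˣ) :
    switched G (switched G σ θ) τ = switched G σ (θ * τ) := by
  funext e
  simp only [switched, switchFactor_mul]
  rw [← mul_assoc, mul_comm (switchFactor τ _) (switchFactor θ _), mul_assoc]

lemma theta_sq (θ : V → ℤˣ) : θ * θ = 1 := by
  funext v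
  exact Int.units_mul_self (θ v)

lemma switched_invol (G : SimpleGraph V) (σ : G.edgeSet → ℤˣ) (θ : V → ℤˣ) :
    switched G (switched G σ θ) θ = σ := by
  rw [switched_switched, theta_sq, switched_one]

lemma actSign_actSign (G : SimpleGraph V) (φ ψ : G ≃g G) (σ : G.edgeSet → ℤˣ) :
    actSign G ψ (actSign G φ σ) = actSign G (φ.trans ψ) σ := by
  funext e
  simp only [actSign]
  congr 1
  apply Subtype.ext
  simp only [mapEdgeSet_val, Sym2.map_map]
  rfl

lemma actSign_refl (G : SimpleGraph V) (σ : G.edgeSet → ℤˣ) :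
    actSign G ((Iso.refl : G ≃g G)) σ = σ := by
  funext e
  simp only [actSign]
  congr 1
  apply Subtype.ext
  rw [mapEdgeSet_val]
  have : ∀ x : V, ((Iso.refl : G ≃g G).symm.toHom) x = x := fun _ => rfl
  conv_lhs => rw [show ⇑((Iso.refl : G ≃g G).symm.toHom) = id from funext this]
  rw [Sym2.map_id]; rfl

lemma actSign_switched (G : SimpleGraph V) (φ : G ≃g G) (σ : G.edgeSet → ℤˣ) (θ : V → ℤˣ) :
    actSign G φ (switched G σ θ) = switched G (actSign G φ σ) (θ ∘ ⇑φ.symm) := by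
  funext e
  simp only [actSign, switched, mapEdgeSet_val]
  rw [switchFactor_comp]
  rfl

lemma switchIso_equiv (G : SimpleGraph V) : Equivalence (SwitchIso G) := by
  constructor
  · intro σ
    exact ⟨(Iso.refl : G ≃g G), 1, by rw [actSign_refl, switched_one]⟩
  · rintro σ₁ σ₂ ⟨φ, θ, h⟩
    refine ⟨φ.symm, θ ∘ ⇑φ, ?_⟩
    rw [h, actSign_switched, actSign_actSign]
    have h1 : (φ.trans φ.symm) = (Iso.refl : G ≃g G) := by
      apply RelIso.ext; intro x; simp
    rw [h1, actSign_refl]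
    have h2 : θ ∘ ⇑φ.symm.symm = θ ∘ ⇑φ := rfl
    rw [h2, switched_invol]
  · rintro σ₁ σ₂ σ₃ ⟨φ, θ, h⟩ ⟨ψ, τ, h'⟩
    refine ⟨φ.trans ψ, (θ ∘ ⇑ψ.symm) * τ, ?_⟩
    rw [h', h, actSign_switched, switched_switched, actSign_actSign]

open Classical in
noncomputable def sgn {n : ℕ} (H : SimpleGraph (Fin n)) :
    (⊤ : SimpleGraph (Fin n)).edgeSet → ℤˣ :=
  fun e => if (e : Sym2 (Fin n)) ∈ H.edgeSet then -1 else 1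

open Classical in
lemma sgn_apply {n : ℕ} (H : SimpleGraph (Fin n)) (e : (⊤ : SimpleGraph (Fin n)).edgeSet)
    (u v : Fin n) (hval : (e : Sym2 (Fin n)) = s(u,v)) :
    sgn H e = if H.Adj u v then -1 else 1 := by
  simp only [sgn, hval, SimpleGraph.mem_edgeSet]

-- σ_{H₁} ≃ σ_{H₂} when H₁ ≅ H₂
lemma sgn_switchIso {n : ℕ} (H₁ H₂ : SimpleGraph (Fin n)) (ι : H₁ ≃g H₂) :
    SwitchIso (⊤ : SimpleGraph (Fin n)) (sgn H₁) (sgn H₂) := by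
  refine ⟨⟨ι.toEquiv, ?_⟩, 1, ?_⟩
  · intro a b
    simp [ι.toEquiv.injective.ne_iff]
  · rw [switched_one]
    funext e
    induction e using Subtype.rec with
    | _ p hp =>
      induction p using Sym2.ind with
      | _ u v =>
        rw [actSign, sgn_apply H₂ _ u v rfl]
        rw [sgn_apply H₁ _ (ι.toEquiv.symm u) (ι.toEquiv.symm v) (by
          rw [mapEdgeSet_val]
          exact Sym2.map_pair_eq _ u v)]
        have : H₁.Adj (ι.toEquiv.symm u) (ι.toEquiv.symm v) ↔ H₂.Adj u v :=
          Iso.map_adj_iff ι.symm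
        rw [this]

lemma sgn_reflects {n : ℕ} (hn : 4 ≤ n) (H₁ H₂ : SimpleGraph (Fin n))
    (h₁ : ∀ v, (H₁.neighborSet v).ncard ≤ n / 4 - 1)
    (h₂ : ∀ v, (H₂.neighborSet v).ncard ≤ n / 4 - 1)
    (h : SwitchIso (⊤ : SimpleGraph (Fin n)) (sgn H₁) (sgn H₂)) :
    Nonempty (H₁ ≃g H₂) := by
  classical
  obtain ⟨φ, θ, hσ⟩ := h
  have key : ∀ u v : Fin n, u ≠ v →
      (if H₂.Adj u v then (-1:ℤˣ) else 1)
        = θ u * θ v * (if H₁.Adj (φ.symm u) (φ.symm v) then -1 else 1) := by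
    intro u v huv
    have he : s(u,v) ∈ (⊤ : SimpleGraph (Fin n)).edgeSet := by simp [huv]
    have hthis := congrFun hσ ⟨s(u,v), he⟩
    rw [sgn_apply H₂ _ u v rfl] at hthis
    rw [hthis]
    show switchFactor θ s(u,v) * _ = _
    rw [switchFactor_pair, actSign,
      sgn_apply H₁ _ (φ.symm u) (φ.symm v)
        (by rw [mapEdgeSet_val]; exact Sym2.map_pair_eq _ u v)]
  have hdeg1 : ∀ u : Fin n, {v | H₁.Adj (φ.symm u) (φ.symm v)}.ncard ≤ n / 4 - 1 := by
    intro u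
    have hset : {v | H₁.Adj (φ.symm u) (φ.symm v)}
        = ⇑φ.toEquiv '' (H₁.neighborSet (φ.symm u)) := by
      rw [Equiv.image_eq_preimage_symm]
      rfl
    rw [hset, Set.ncard_image_of_injective _ φ.toEquiv.injective]
    exact h₁ _
  by_cases hA : ∃ a, θ a = -1
  · by_cases hB : ∃ b, θ b = 1
    · -- impossible: both values occur
      exfalso
      obtain ⟨a, ha⟩ := hA
      obtain ⟨b, hb⟩ := hB
      set A : Set (Fin n) := {v | θ v = -1} with hAdef
      have hcompl : Aᶜ = {v | θ v = 1} := by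
        ext v
        rcases Int.units_eq_one_or (θ v) with hv | hv <;>
          simp [hAdef, hv]
      -- the bound from a vertex of given sign
      have bound : ∀ (u : Fin n) (S : Set (Fin n)), (∀ v ∈ S, v ≠ u → θ u * θ v = -1) →
          S.ncard ≤ 2 * (n / 4 - 1) + 1 := by
        intro u S hS
        have hsub : S \ {u} ⊆ H₂.neighborSet u ∪ {v | H₁.Adj (φ.symm u) (φ.symm v)} := by
          rintro v ⟨hv1, hv2⟩
          simp only [Set.mem_singleton_iff] at hv2
          by_cases hadj : H₁.Adj (φ.symm u) (φ.symm v)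
          · exact Or.inr hadj
          · left
            have hk := key u v (fun hh => hv2 hh.symm)
            rw [if_neg hadj, hS v hv1 hv2, mul_one] at hk
            by_contra hno
            rw [SimpleGraph.mem_neighborSet] at hno
            rw [if_neg hno] at hk
            exact absurd hk (by decide)
        have h1 : S.ncard ≤ (S \ {u}).ncard + 1 := by
          calc S.ncard ≤ ((S \ {u}) ∪ {u}).ncard := by
                apply Set.ncard_le_ncard
                · intro x hx
                  by_cases hxu : x = u
                  · exact Or.inr hxu
                  · exact Or.inl ⟨hx, hxu⟩
                · exact Set.toFinite _
            _ ≤ (S \ {u}).ncard + ({u} : Set (Fin n)).ncard := Set.ncard_union_le _ _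
            _ = (S \ {u}).ncard + 1 := by rw [Set.ncard_singleton]
        have h2' : (S \ {u}).ncard ≤ 2 * (n / 4 - 1) := by
          calc (S \ {u}).ncard
              ≤ (H₂.neighborSet u ∪ {v | H₁.Adj (φ.symm u) (φ.symm v)}).ncard :=
                Set.ncard_le_ncard hsub (Set.toFinite _)
            _ ≤ (H₂.neighborSet u).ncard + {v | H₁.Adj (φ.symm u) (φ.symm v)}.ncard :=
                Set.ncard_union_le _ _
            _ ≤ (n / 4 - 1) + (n / 4 - 1) := Nat.add_le_add (h₂ u) (hdeg1 u)
            _ = 2 * (n / 4 - 1) := by ring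
        omega
      have hbA : Aᶜ.ncard ≤ 2 * (n / 4 - 1) + 1 := by
        apply bound a
        intro v hv _
        rw [hcompl] at hv
        rw [ha, hv]
        decide
      have hbB : A.ncard ≤ 2 * (n / 4 - 1) + 1 := by
        apply bound b
        intro v hv _
        rw [hAdef] at hv
        rw [hb, hv]
        decide
      have hsum : A.ncard + Aᶜ.ncard = n := by
        rw [Set.ncard_add_ncard_compl, Nat.card_eq_fintype_card, Fintype.card_fin]
      have hdiv : 4 * (n / 4) ≤ n := by omega
      have hge : 1 ≤ n / 4 := by omega
      omega
    · -- θ ≡ -1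
      push_neg at hB
      have hconst : ∀ u v : Fin n, θ u * θ v = 1 := by
        intro u v
        have hu : θ u = -1 := (Int.units_eq_one_or (θ u)).resolve_left (hB u)
        have hv : θ v = -1 := (Int.units_eq_one_or (θ v)).resolve_left (hB v)
        rw [hu, hv]; decide
      have hiff : ∀ u v : Fin n, H₂.Adj u v ↔ H₁.Adj (φ.symm u) (φ.symm v) := by
        intro u v
        by_cases huv : u = v
        · subst huv
          simp
        · have hk := key u v huv
          rw [hconst u v, one_mul] at hk
          by_cases hp : H₂.Adj u v <;> by_cases hq : H₁.Adj (φ.symm u) (φ.symm v) <;>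
            simp only [hp, hq, if_true, if_false, if_pos, if_neg] at hk ⊢ <;>
            first | trivial | (exact absurd hk (by decide))
      exact ⟨⟨φ.toEquiv, by
        intro a b
        rw [hiff]
        show H₁.Adj (φ.symm (φ a)) (φ.symm (φ b)) ↔ H₁.Adj a b
        rw [RelIso.symm_apply_apply, RelIso.symm_apply_apply]⟩⟩
  · -- θ ≡ 1
    push_neg at hA
    have hconst : ∀ u v : Fin n, θ u * θ v = 1 := by
      intro u v
      have hu : θ u = 1 := (Int.units_eq_one_or (θ u)).resolve_right (hA u)
      have hv : θ v = 1 := (Int.units_eq_one_or (θ v)).resolve_right (hA v)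
      rw [hu, hv]; decide
    have hiff : ∀ u v : Fin n, H₂.Adj u v ↔ H₁.Adj (φ.symm u) (φ.symm v) := by
      intro u v
      by_cases huv : u = v
      · subst huv
        simp
      · have hk := key u v huv
        rw [hconst u v, one_mul] at hk
        by_cases hp : H₂.Adj u v <;> by_cases hq : H₁.Adj (φ.symm u) (φ.symm v) <;>
          simp only [hp, hq, if_true, if_false, if_pos, if_neg] at hk ⊢ <;>
          first | trivial | (exact absurd hk (by decide))
    exact ⟨⟨φ.toEquiv, by
      intro a b
      rw [hiff]
      show H₁.Adj (φ.symm (φ a)) (φ.symm (φ b)) ↔ H₁.Adj a b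
      rw [RelIso.symm_apply_apply, RelIso.symm_apply_apply]⟩⟩

theorem card_switchIso_classes_lower_bound (n : ℕ) (hn : 4 ≤ n) :
    Nat.card (Quot (fun H₁ H₂ :
        {H : SimpleGraph (Fin n) // ∀ v, (H.neighborSet v).ncard ≤ n / 4 - 1} =>
      Nonempty (H₁.val ≃g H₂.val))) ≤
      Nat.card (Quot (SwitchIso (⊤ : SimpleGraph (Fin n)))) := by
  classical
  apply Nat.card_le_card_of_injective
    (Quot.map (fun H => sgn H.val)
      (fun H₁ H₂ hH => hH.elim fun ι => sgn_switchIso _ _ ι))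
  intro x y
  induction x using Quot.ind with
  | _ a =>
    induction y using Quot.ind with
    | _ b =>
      intro hab
      have hab' : Quot.mk _ (sgn a.val) = Quot.mk (SwitchIso (⊤ : SimpleGraph (Fin n))) (sgn b.val) := hab
      rw [Quot.eq] at hab'
      have hsw := (Equivalence.eqvGen_iff (switchIso_equiv _)).mp hab'
      exact Quot.sound (sgn_reflects hn a.val b.val a.property b.property hsw)
end
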